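/- arXiv:1012.5535 — 3 statements merged into one kernel-verified Lean document; each statement's English description precedes it below -/
import Mathlib

section
/- If x = j/2^N ∈ [0,1) is a dyadic rational and 1/2 < a < 1, then the right-hand derivative of L_a at x equals +∞. -/
/-!
On the dyadic interval `[j/2^N, (j+1)/2^N]` the graph of `L` is an affine copy of its whole graph
with a positive vertical factor `β`, so the right difference quotient at `j/2^N` is `2^N β` times
`L s / s` with `s = 2^N h`. Since `L (s/2^m) = a^m L s` and `L ≥ a` on `[1/2, 1]` (because `L ≥ 0`
on `[0, 1]`, as one sees at a minimum point), `L s / s ≥ a (2a)^m` for `s ∈ (2^{-m-1}, 2^{-m}]`,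
and `(2a)^m → ∞` because `a > 1/2`.
-/

open Topology Filter Set

/-- The de Rham functional equation characterizing Lebesgue's singular function `L_a`
on `[0,1]`, together with continuity. -/
def deRham (a : ℝ) (L : ℝ → ℝ) : Prop :=
  ContinuousOn L (Set.Icc 0 1) ∧
  (∀ x ∈ Set.Icc (0:ℝ) (1/2), L x = a * L (2*x)) ∧
  (∀ x ∈ Set.Icc (1/2:ℝ) 1, L x = (1-a) * L (2*x - 1) + a)

namespace deRham

variable {a : ℝ} {L : ℝ → ℝ}

lemma map_zero (hL : deRham a L) (ha1 : a < 1) : L 0 = 0 := by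
  have h := hL.2.1 0 (by norm_num)
  rw [mul_zero] at h
  nlinarith

lemma exists_affine_dyadic (hL : deRham a L) (ha0 : 0 < a) (ha1 : a < 1) (n : ℕ) :
    ∀ k : ℕ, k < 2 ^ n →
      ∃ α, ∃ β > 0, ∀ t ∈ Icc (0:ℝ) 1, L ((k + t) / 2 ^ n) = α + β * L t := by
  induction n with
  | zero =>
    intro k hk
    obtain rfl : k = 0 := by simpa using hk
    exact ⟨0, 1, one_pos, fun t _ => by simp⟩
  | succ n ih =>
    intro k hk
    have h2n : (0:ℝ) < 2 ^ n := by positivity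
    rcases lt_or_ge k (2 ^ n) with hkn | hkn
    · obtain ⟨α, β, hβ, h⟩ := ih k hkn
      refine ⟨a * α, a * β, by positivity, fun t ht => ?_⟩
      have hk1 : (k:ℝ) + 1 ≤ 2 ^ n := by exact_mod_cast hkn
      have hmem : (k + t) / 2 ^ (n + 1) ∈ Icc (0:ℝ) (1/2) := by
        refine ⟨div_nonneg (by linarith [ht.1]) (by positivity), ?_⟩
        rw [div_le_iff₀ (by positivity), pow_succ]
        linarith [ht.2]
      rw [hL.2.1 _ hmem, show 2 * ((k + t) / 2 ^ (n + 1)) = (k + t) / 2 ^ n by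
        rw [pow_succ]; field_simp, h t ht]
      ring
    · obtain ⟨r, rfl⟩ := Nat.exists_eq_add_of_le hkn
      have hr : r < 2 ^ n := by rw [pow_succ] at hk; omega
      obtain ⟨α, β, hβ, h⟩ := ih r hr
      refine ⟨(1 - a) * α + a, (1 - a) * β, mul_pos (sub_pos.2 ha1) hβ, fun t ht => ?_⟩
      have hr1 : (r:ℝ) + 1 ≤ 2 ^ n := by exact_mod_cast hr
      have hmem : ((2 ^ n + r : ℕ) + t) / 2 ^ (n + 1) ∈ Icc (1/2 : ℝ) 1 := by
        push_cast
        constructor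
        · rw [le_div_iff₀ (by positivity), pow_succ]; linarith [ht.1]
        · rw [div_le_one (by positivity), pow_succ]; linarith [ht.2]
      rw [hL.2.2 _ hmem, show 2 * (((2 ^ n + r : ℕ) + t) / 2 ^ (n + 1)) - 1 = (r + t) / 2 ^ n by
        push_cast; rw [pow_succ]; field_simp; ring, h t ht]
      ring

lemma nonneg (hL : deRham a L) (ha0 : 0 < a) (ha1 : a < 1) {x : ℝ} (hx : x ∈ Icc 0 1) :
    0 ≤ L x := by
  obtain ⟨y, hy, hmin⟩ := isCompact_Icc.exists_isMinOn (nonempty_Icc.2 zero_le_one) hL.1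
  refine le_trans ?_ (hmin hx)
  rcases le_total y (1/2) with hy2 | hy2
  · have h := hL.2.1 y ⟨hy.1, hy2⟩
    have : L y ≤ L (2 * y) := hmin ⟨by linarith [hy.1], by linarith⟩
    nlinarith
  · have h := hL.2.2 y ⟨hy2, hy.2⟩
    have : L y ≤ L (2 * y - 1) := hmin ⟨by linarith, by linarith [hy.2]⟩
    nlinarith

lemma map_div_two_pow (hL : deRham a L) (n : ℕ) {s : ℝ} (hs : s ∈ Icc 0 1) :
    L (s / 2 ^ n) = a ^ n * L s := by
  induction n with
  | zero => simp
  | succ n ih =>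
    have hsn : s / 2 ^ (n + 1) ∈ Icc (0:ℝ) (1/2) := by
      refine ⟨div_nonneg hs.1 (by positivity), ?_⟩
      rw [pow_succ, div_le_iff₀ (by positivity)]
      linarith [hs.2, one_le_pow₀ (one_le_two (α := ℝ)) (n := n)]
    rw [hL.2.1 _ hsn, show 2 * (s / 2 ^ (n + 1)) = s / 2 ^ n by rw [pow_succ]; field_simp, ih,
      pow_succ]
    ring

lemma mul_two_mul_pow_le_div_self (hL : deRham a L) (ha0 : 0 < a) (ha1 : a < 1) (m : ℕ)
    {u : ℝ} (hu : u ∈ Ioc (1/2) 1) :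
    a * (2 * a) ^ m ≤ L (u / 2 ^ m) / (u / 2 ^ m) := by
  have hLu : a ≤ L u := by
    rw [hL.2.2 u ⟨hu.1.le, hu.2⟩]
    nlinarith [hL.nonneg ha0 ha1 (x := 2 * u - 1) ⟨by linarith [hu.1], by linarith [hu.2]⟩]
  have hu0 : 0 < u := by linarith [hu.1]
  rw [le_div_iff₀ (by positivity), hL.map_div_two_pow m ⟨hu0.le, hu.2⟩, mul_pow]
  calc a * (2 ^ m * a ^ m) * (u / 2 ^ m) = a ^ m * a * u := by field_simp
    _ ≤ a ^ m * a := mul_le_of_le_one_right (by positivity) hu.2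
    _ ≤ a ^ m * L u := by gcongr

lemma tendsto_div_self_nhdsGT_zero (hL : deRham a L) (ha0 : 1/2 < a) (ha1 : a < 1) :
    Tendsto (fun s => L s / s) (𝓝[>] 0) atTop := by
  have ha : 0 < a := by linarith
  have hgrow : Tendsto (fun m : ℕ => a * (2 * a) ^ m) atTop atTop :=
    (tendsto_pow_atTop_atTop_of_one_lt (by linarith)).const_mul_atTop ha
  rw [tendsto_atTop]
  intro C
  obtain ⟨k, hk⟩ := (hgrow.eventually_ge_atTop C).exists_forall_of_atTop
  filter_upwards [Ioc_mem_nhdsGT (show (0:ℝ) < (2 ^ k)⁻¹ by positivity)] with s ⟨hs0, hsk⟩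
  have hks : (2:ℝ) ^ k ≤ s⁻¹ := (le_inv_comm₀ (by positivity) hs0).2 hsk
  obtain ⟨m, hms, hsm⟩ := exists_nat_pow_near ((one_le_pow₀ one_le_two).trans hks) one_lt_two
  have hkm : k ≤ m := Nat.lt_succ_iff.1 ((pow_lt_pow_iff_right₀ one_lt_two).1 (hks.trans_lt hsm))
  have hu : 2 ^ m * s ∈ Ioc (1/2 : ℝ) 1 := by
    rw [← mul_le_mul_iff_left₀ hs0, inv_mul_cancel₀ hs0.ne'] at hms
    rw [inv_lt_iff_one_lt_mul₀ hs0, pow_succ] at hsm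
    exact ⟨by linarith, by linarith⟩
  have := hL.mul_two_mul_pow_le_div_self ha ha1 m hu
  rw [mul_div_cancel_left₀ s (by positivity)] at this
  exact (hk m hkm).trans this

end deRham

theorem right_deriv_top_at_dyadic (a : ℝ) (ha0 : 1/2 < a) (ha1 : a < 1)
    (L : ℝ → ℝ) (hL : deRham a L)
    (x : ℝ) (j N : ℕ) (hx : x = (j : ℝ) / 2 ^ N) (hx1 : x < 1) :
    Tendsto (fun h : ℝ => (L (x+h) - L x) / h) (𝓝[>] 0) atTop := by
  have h2N : (0:ℝ) < 2 ^ N := by positivity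
  have hj : j < 2 ^ N := by rw [hx, div_lt_one h2N] at hx1; exact_mod_cast hx1
  obtain ⟨α, β, hβ, hαβ⟩ := hL.exists_affine_dyadic (by linarith) ha1 N j hj
  have hLx : L x = α := by simpa [hL.map_zero ha1, ← hx] using hαβ 0 ⟨le_rfl, zero_le_one⟩
  have hscale : Tendsto (fun h : ℝ => 2 ^ N * h) (𝓝[>] 0) (𝓝[>] 0) :=
    tendsto_nhdsWithin_iff.2
      ⟨by simpa using ((continuous_const_mul ((2:ℝ) ^ N)).tendsto 0).mono_left nhdsWithin_le_nhds,
        eventually_mem_nhdsWithin.mono fun h hh => mul_pos h2N hh⟩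
  refine (((hL.tendsto_div_self_nhdsGT_zero ha0 ha1).comp hscale).const_mul_atTop
    (mul_pos h2N hβ)).congr' ?_
  filter_upwards [Ioc_mem_nhdsGT (inv_pos.2 h2N)] with h ⟨h0, hhN⟩
  have hxh := hαβ (2 ^ N * h) ⟨by positivity,
    (mul_le_mul_of_nonneg_left hhN h2N.le).trans_eq (mul_inv_cancel₀ h2N.ne')⟩
  rw [show ((j:ℝ) + 2 ^ N * h) / 2 ^ N = x + h by rw [hx]; field_simp] at hxh
  rw [Function.comp_apply, hxh, hLx]
  field_simp
  ring
end

section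
/- At every dyadic rational x ∈ (0,1), the one-sided derivatives of L_a differ: L'_{a+}(x) ≠ L'_{a-}(x) (one is 0 and the other is +∞); hence L_a is not differentiable at any dyadic rational in (0,1). -/
/-! On a dyadic interval `[k/2ⁿ, (k+1)/2ⁿ]` the function `L` is an affine copy of itself with a
positive scale factor. At a dyadic point `x` this gives `L (x + h/2) - L x = a (L (x + h) - L x)`
for small `h > 0`, so halving `h` multiplies the right difference quotient by `2a`. Since the
quotient stays between positive constants for `h` in one dyadic range `(δ/2, δ]`, it tends to `0`
if `2a < 1` and to `+∞` if `2a > 1`. Left difference quotients of `L` at `x` are right difference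
quotients at `1 - x` of `y ↦ 1 - L (1 - y)`, which satisfies the same equation with `1 - a`; so
the two one-sided behaviours are opposite. -/

open Topology Filter Set

section Doubling

variable {δ : ℝ}

lemma two_pow_log_floor_div_mul_mem_Ioc {h : ℝ} (hh : h ∈ Ioc 0 δ) :
    2 ^ Nat.log 2 ⌊δ / h⌋₊ * h ∈ Ioc (δ / 2) δ := by
  obtain ⟨h0, hδ⟩ := hh
  set m := Nat.log 2 ⌊δ / h⌋₊
  have hfloor : ⌊δ / h⌋₊ ≠ 0 := (Nat.floor_pos.2 ((one_le_div h0).2 hδ)).ne'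
  have hlow : (2 : ℝ) ^ m ≤ δ / h :=
    le_trans (by exact_mod_cast Nat.pow_log_le_self 2 hfloor)
      (Nat.floor_le (div_pos (h0.trans_le hδ) h0).le)
  have hup : δ / h < 2 ^ (m + 1) :=
    (Nat.lt_floor_add_one _).trans_le (by exact_mod_cast Nat.lt_pow_succ_log_self one_lt_two _)
  constructor
  · rw [div_lt_iff₀ h0, pow_succ] at hup
    linarith
  · rwa [le_div_iff₀ h0] at hlow

lemma tendsto_log_floor_div_nhdsGT_zero (hδ : 0 < δ) :
    Tendsto (fun h : ℝ => Nat.log 2 ⌊δ / h⌋₊) (𝓝[>] 0) atTop := by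
  have hlog : Tendsto (Nat.log 2) atTop atTop :=
    tendsto_atTop_atTop_of_monotone Nat.log_monotone fun b =>
      ⟨2 ^ b, (Nat.log_pow one_lt_two b).ge⟩
  refine hlog.comp (tendsto_nat_floor_atTop.comp ?_)
  exact (tendsto_inv_nhdsGT_zero.const_mul_atTop hδ).congr fun h => (div_eq_mul_inv δ h).symm

variable {q : ℝ → ℝ} {r : ℝ}

lemma eq_pow_mul_of_div_two (hq : ∀ h ∈ Ioc 0 δ, q (h / 2) = r * q h) {h : ℝ} (h0 : 0 < h) :
    ∀ n : ℕ, 2 ^ n * h ≤ δ → q h = r ^ n * q (2 ^ n * h)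
  | 0, _ => by simp
  | n + 1, hn => by
    have hle : 2 ^ n * h ≤ 2 ^ (n + 1) * h := by gcongr <;> norm_num
    have hhalf : 2 ^ (n + 1) * h / 2 = 2 ^ n * h := by ring
    rw [eq_pow_mul_of_div_two hq h0 n (hle.trans hn), ← hhalf,
      hq _ ⟨by positivity, hn⟩, pow_succ]
    ring

lemma tendsto_nhdsGT_zero_of_div_two (hδ : 0 < δ) (hr0 : 0 ≤ r) (hr1 : r < 1)
    (hq : ∀ h ∈ Ioc 0 δ, q (h / 2) = r * q h) {C : ℝ}
    (hC : ∀ h ∈ Ioc (δ / 2) δ, |q h| ≤ C) :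
    Tendsto q (𝓝[>] 0) (𝓝 0) := by
  refine squeeze_zero_norm' (a := fun h => C * r ^ Nat.log 2 ⌊δ / h⌋₊) ?_ ?_
  · filter_upwards [Ioc_mem_nhdsGT hδ] with h hh
    have hm := two_pow_log_floor_div_mul_mem_Ioc hh
    rw [Real.norm_eq_abs, eq_pow_mul_of_div_two hq hh.1 _ hm.2, abs_mul,
      abs_of_nonneg (pow_nonneg hr0 _), mul_comm]
    exact mul_le_mul_of_nonneg_right (hC _ hm) (pow_nonneg hr0 _)
  · simpa using ((tendsto_pow_atTop_nhds_zero_of_lt_one hr0 hr1).comp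
      (tendsto_log_floor_div_nhdsGT_zero hδ)).const_mul C

lemma tendsto_atTop_of_div_two (hδ : 0 < δ) (hr : 1 < r)
    (hq : ∀ h ∈ Ioc 0 δ, q (h / 2) = r * q h) {c : ℝ} (hc : 0 < c)
    (hc' : ∀ h ∈ Ioc (δ / 2) δ, c ≤ q h) :
    Tendsto q (𝓝[>] 0) atTop := by
  refine tendsto_atTop_mono' _ (f₁ := fun h => c * r ^ Nat.log 2 ⌊δ / h⌋₊) ?_
    (((tendsto_pow_atTop_atTop_of_one_lt hr).comp
      (tendsto_log_floor_div_nhdsGT_zero hδ)).const_mul_atTop hc)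
  filter_upwards [Ioc_mem_nhdsGT hδ] with h hh
  have hm := two_pow_log_floor_div_mul_mem_Ioc hh
  rw [eq_pow_mul_of_div_two hq hh.1 _ hm.2, mul_comm]
  exact mul_le_mul_of_nonneg_left (hc' _ hm) (by positivity)

end Doubling

namespace deRham

variable {a : ℝ} {L : ℝ → ℝ}

lemma apply_div_two (hL : deRham a L) {t : ℝ} (ht : t ∈ Icc (0 : ℝ) 1) :
    L (t / 2) = a * L t := by
  rw [hL.2.1 _ ⟨by linarith [ht.1], by linarith [ht.2]⟩]
  ring_nf

lemma apply_add_one_div_two (hL : deRham a L) {t : ℝ} (ht : t ∈ Icc (0 : ℝ) 1) :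
    L ((t + 1) / 2) = (1 - a) * L t + a := by
  rw [hL.2.2 _ ⟨by linarith [ht.1], by linarith [ht.2]⟩]
  ring_nf

lemma apply_zero (ha1 : a < 1) (hL : deRham a L) : L 0 = 0 := by
  have h := hL.apply_div_two (t := 0) (by norm_num)
  norm_num at h
  nlinarith

lemma mapsTo_Icc (ha0 : 0 < a) (ha1 : a < 1) (hL : deRham a L) :
    MapsTo L (Icc 0 1) (Icc 0 1) := by
  have hne : (Icc (0 : ℝ) 1).Nonempty := nonempty_Icc.2 zero_le_one
  obtain ⟨u, hu, hmax⟩ := isCompact_Icc.exists_isMaxOn hne hL.1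
  obtain ⟨v, hv, hmin⟩ := isCompact_Icc.exists_isMinOn hne hL.1
  intro t ht
  refine ⟨(?_ : 0 ≤ L v).trans (hmin ht), (hmax ht).trans ?_⟩
  · rcases le_total v (1 / 2) with hv2 | hv2
    · have : L v ≤ L (2 * v) := hmin ⟨by linarith [hv.1], by linarith⟩
      rw [hL.2.1 v ⟨hv.1, hv2⟩] at this ⊢
      nlinarith
    · have : L v ≤ L (2 * v - 1) := hmin ⟨by linarith, by linarith [hv.2]⟩
      rw [hL.2.2 v ⟨hv2, hv.2⟩] at this ⊢
      nlinarith
  · rcases le_total u (1 / 2) with hu2 | hu2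
    · have : L (2 * u) ≤ L u := hmax ⟨by linarith [hu.1], by linarith⟩
      rw [hL.2.1 u ⟨hu.1, hu2⟩] at this ⊢
      nlinarith
    · have : L (2 * u - 1) ≤ L u := hmax ⟨by linarith, by linarith [hu.2]⟩
      rw [hL.2.2 u ⟨hu2, hu.2⟩] at this ⊢
      nlinarith

lemma mem_Icc_of_mem_Icc_half_one (ha0 : 0 < a) (ha1 : a < 1) (hL : deRham a L) {t : ℝ}
    (ht : t ∈ Icc (1 / 2 : ℝ) 1) : L t ∈ Icc a 1 := by
  have h := hL.mapsTo_Icc ha0 ha1 (x := 2 * t - 1) ⟨by linarith [ht.1], by linarith [ht.2]⟩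
  rw [hL.2.2 t ht]
  constructor <;> nlinarith [h.1, h.2]

lemma reflect (hL : deRham a L) : deRham (1 - a) (fun y => 1 - L (1 - y)) := by
  obtain ⟨hc, h₁, h₂⟩ := hL
  refine ⟨continuousOn_const.sub (hc.comp (by fun_prop) fun y hy => ?_), fun y hy => ?_,
    fun y hy => ?_⟩
  · exact ⟨by linarith [hy.2], by linarith [hy.1]⟩
  · beta_reduce
    rw [h₂ (1 - y) ⟨by linarith [hy.2], by linarith [hy.1]⟩]
    ring_nf
  · beta_reduce
    rw [h₁ (1 - y) ⟨by linarith [hy.2], by linarith [hy.1]⟩]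
    ring_nf

lemma exists_affine_on_dyadic (ha0 : 0 < a) (ha1 : a < 1) (hL : deRham a L) :
    ∀ {n k : ℕ}, k < 2 ^ n →
      ∃ α, ∃ β > 0, ∀ t ∈ Icc (0 : ℝ) 1, L ((k + t) / 2 ^ n) = α + β * L t
  | 0, k, hk => ⟨0, 1, one_pos, fun t _ => by simp [Nat.lt_one_iff.1 (by simpa using hk)]⟩
  | n + 1, k, hk => by
    have mem : ∀ {k : ℕ}, k < 2 ^ n → ∀ t ∈ Icc (0 : ℝ) 1,
        (k + t) / 2 ^ n ∈ Icc (0 : ℝ) 1 := by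
      intro k hk t ht
      have : (k : ℝ) + 1 ≤ 2 ^ n := by exact_mod_cast hk
      exact ⟨by positivity [ht.1], (div_le_one (by positivity)).2 (by linarith [ht.2])⟩
    rcases lt_or_ge k (2 ^ n) with hkn | hkn
    · obtain ⟨α, β, hβ, hαβ⟩ := exists_affine_on_dyadic ha0 ha1 hL hkn
      refine ⟨a * α, a * β, mul_pos ha0 hβ, fun t ht => ?_⟩
      have hsplit : ((k : ℝ) + t) / 2 ^ (n + 1) = ((k + t) / 2 ^ n) / 2 := by ring
      rw [hsplit, hL.apply_div_two (mem hkn t ht), hαβ t ht]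
      ring
    · obtain ⟨k', rfl⟩ := Nat.exists_eq_add_of_le hkn
      have hk' : k' < 2 ^ n := by rw [pow_succ] at hk; omega
      obtain ⟨α, β, hβ, hαβ⟩ := exists_affine_on_dyadic ha0 ha1 hL hk'
      refine ⟨(1 - a) * α + a, (1 - a) * β, mul_pos (by linarith) hβ, fun t ht => ?_⟩
      have hsplit :
          (((2 ^ n + k' : ℕ) : ℝ) + t) / 2 ^ (n + 1) = ((k' + t) / 2 ^ n + 1) / 2 := by
        push_cast
        field_simp
        ring
      rw [hsplit, hL.apply_add_one_div_two (mem hk' t ht), hαβ t ht]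
      ring

lemma exists_sub_eq_mul_of_dyadic (ha0 : 0 < a) (ha1 : a < 1) (hL : deRham a L) {n k : ℕ}
    (hk : k < 2 ^ n) :
    ∃ β > 0, ∀ t ∈ Icc (0 : ℝ) 1,
      L (k / 2 ^ n + t * (2 ^ n)⁻¹) - L (k / 2 ^ n) = β * L t := by
  obtain ⟨α, β, hβ, hαβ⟩ := hL.exists_affine_on_dyadic ha0 ha1 hk
  have hα : L (k / 2 ^ n) = α := by
    simpa [hL.apply_zero ha1] using hαβ 0 (by norm_num)
  refine ⟨β, hβ, fun t ht => ?_⟩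
  have hpt : (k : ℝ) / 2 ^ n + t * (2 ^ n)⁻¹ = (k + t) / 2 ^ n := by ring
  rw [hpt, hαβ t ht, hα]
  ring

lemma tendsto_slope_of_sub_eq_mul (ha0 : 0 < a) (ha1 : a < 1) (hL : deRham a L) {x δ β : ℝ}
    (hδ : 0 < δ) (hβ : 0 < β)
    (hx : ∀ t ∈ Icc (0 : ℝ) 1, L (x + t * δ) - L x = β * L t) :
    (a < 1 / 2 → Tendsto (fun h => (L (x + h) - L x) / h) (𝓝[>] 0) (𝓝 0)) ∧
      (1 / 2 < a → Tendsto (fun h => (L (x + h) - L x) / h) (𝓝[>] 0) atTop) := by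
  have hslope : ∀ h ∈ Ioc 0 δ, (L (x + h) - L x) / h = β * L (h / δ) / h := fun h hh => by
    rw [← hx (h / δ) ⟨by positivity [hh.1.le], (div_le_one hδ).2 hh.2⟩,
      div_mul_cancel₀ h hδ.ne']
  have hhalf : ∀ h ∈ Ioc 0 δ,
      (L (x + h / 2) - L x) / (h / 2) = (2 * a) * ((L (x + h) - L x) / h) := fun h hh => by
    have hh2 : h / 2 ∈ Ioc 0 δ := ⟨by linarith [hh.1], by linarith [hh.1, hh.2]⟩
    rw [hslope h hh, hslope _ hh2, div_right_comm,
      hL.apply_div_two ⟨by positivity [hh.1.le], (div_le_one hδ).2 hh.2⟩]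
    field_simp
  have hbounds : ∀ h ∈ Ioc (δ / 2) δ,
      β * a / δ ≤ (L (x + h) - L x) / h ∧ (L (x + h) - L x) / h ≤ 2 * β / δ := by
    intro h hh
    have h0 : 0 < h := by linarith [hh.1]
    have hLt := hL.mem_Icc_of_mem_Icc_half_one ha0 ha1
      ⟨(le_div_iff₀ hδ).2 (by linarith [hh.1]), (div_le_one hδ).2 hh.2⟩
    rw [hslope h ⟨h0, hh.2⟩]
    constructor
    · calc β * a / δ ≤ β * a / h := div_le_div_of_nonneg_left (by positivity) h0 hh.2
        _ ≤ β * L (h / δ) / h := by gcongr; exact hLt.1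
    · calc β * L (h / δ) / h ≤ β * 1 / h := by gcongr; exact hLt.2
        _ ≤ 2 * β / δ := by rw [div_le_div_iff₀ h0 hδ]; nlinarith [hh.1]
  constructor
  · intro ha
    refine tendsto_nhdsGT_zero_of_div_two hδ (by linarith) (by linarith) hhalf (C := 2 * β / δ)
      fun h hh => ?_
    rw [abs_of_nonneg ((by positivity : 0 ≤ β * a / δ).trans (hbounds h hh).1)]
    exact (hbounds h hh).2
  · intro ha
    exact tendsto_atTop_of_div_two hδ (by linarith) hhalf (by positivity) fun h hh =>
      (hbounds h hh).1

lemma tendsto_slope_dyadic (ha0 : 0 < a) (ha1 : a < 1)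
    (hL : deRham a L) {n k : ℕ} (hk : k < 2 ^ n) {x : ℝ} (hx : x = k / 2 ^ n) :
    (a < 1 / 2 → Tendsto (fun h => (L (x + h) - L x) / h) (𝓝[>] 0) (𝓝 0)) ∧
      (1 / 2 < a → Tendsto (fun h => (L (x + h) - L x) / h) (𝓝[>] 0) atTop) := by
  obtain ⟨β, hβ, hsub⟩ := hL.exists_sub_eq_mul_of_dyadic ha0 ha1 hk
  rw [← hx] at hsub
  exact hL.tendsto_slope_of_sub_eq_mul ha0 ha1 (by positivity) hβ hsub

end deRham

lemma tendsto_slope_nhdsLT_of_reflect {f : ℝ → ℝ} {x : ℝ} {l : Filter ℝ}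
    (hf : Tendsto (fun h => (1 - f (1 - (1 - x + h)) - (1 - f (1 - (1 - x)))) / h) (𝓝[>] 0) l) :
    Tendsto (fun h => (f (x + h) - f x) / h) (𝓝[<] 0) l := by
  have hneg : Tendsto (fun h : ℝ => -h) (𝓝[<] 0) (𝓝[>] 0) :=
    tendsto_nhdsWithin_iff.2
      ⟨by simpa using (continuous_neg.tendsto (0 : ℝ)).mono_left nhdsWithin_le_nhds,
        eventually_mem_nhdsWithin.mono fun _ hh => neg_pos.2 (mem_Iio.1 hh)⟩
  refine (hf.comp hneg).congr fun h => ?_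
  simp only [Function.comp_apply]
  rw [← neg_div_neg_eq]
  ring_nf

lemma not_exists_tendsto_nhdsNE_of_tendsto_atTop {f : ℝ → ℝ} {c : ℝ}
    (hf : Tendsto f (𝓝[>] c) atTop ∨ Tendsto f (𝓝[<] c) atTop) :
    ¬ ∃ l : ℝ, Tendsto f (𝓝[≠] c) (𝓝 l) := by
  rintro ⟨l, hl⟩
  rcases hf with htop | htop
  · exact not_tendsto_nhds_of_tendsto_atTop htop l
      (hl.mono_left (nhdsWithin_mono _ fun _ hh => hh.ne'))
  · exact not_tendsto_nhds_of_tendsto_atTop htop l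
      (hl.mono_left (nhdsWithin_mono _ fun _ hh => hh.ne))

theorem not_differentiable_at_dyadic (a : ℝ) (ha0 : 0 < a) (ha1 : a < 1)
    (ha : a ≠ 1/2) (L : ℝ → ℝ) (hL : deRham a L)
    (x : ℝ) (j N : ℕ) (hx : x = (j : ℝ) / 2 ^ N) (hx0 : 0 < x) (hx1 : x < 1) :
    ((Tendsto (fun h : ℝ => (L (x+h) - L x) / h) (𝓝[>] 0) (𝓝 0) ∧
        Tendsto (fun h : ℝ => (L (x+h) - L x) / h) (𝓝[<] 0) atTop) ∨
      (Tendsto (fun h : ℝ => (L (x+h) - L x) / h) (𝓝[>] 0) atTop ∧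
        Tendsto (fun h : ℝ => (L (x+h) - L x) / h) (𝓝[<] 0) (𝓝 0))) ∧
    ¬ ∃ l : ℝ, Tendsto (fun h : ℝ => (L (x+h) - L x) / h) (𝓝[≠] 0) (𝓝 l) := by
  have hjN : j < 2 ^ N := by
    rw [hx, div_lt_one (by positivity)] at hx1
    exact_mod_cast hx1
  have hj0 : 0 < j := by
    rw [hx] at hx0
    exact_mod_cast (div_pos_iff_of_pos_right (by positivity)).1 hx0
  have hx' : 1 - x = ((2 ^ N - j : ℕ) : ℝ) / 2 ^ N := by
    rw [hx, Nat.cast_sub hjN.le]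
    push_cast
    field_simp
  obtain ⟨hright0, hrightTop⟩ := hL.tendsto_slope_dyadic ha0 ha1 hjN hx
  obtain ⟨hleft0, hleftTop⟩ :=
    hL.reflect.tendsto_slope_dyadic (by linarith) (by linarith) (by omega : 2 ^ N - j < 2 ^ N) hx'
  rcases ha.lt_or_gt with ha | ha
  · have hleft := tendsto_slope_nhdsLT_of_reflect (hleftTop (by linarith))
    exact ⟨.inl ⟨hright0 ha, hleft⟩, not_exists_tendsto_nhdsNE_of_tendsto_atTop (.inr hleft)⟩
  · have hright := hrightTop ha
    exact ⟨.inr ⟨hright, tendsto_slope_nhdsLT_of_reflect (hleft0 (by linarith))⟩,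
      not_exists_tendsto_nhdsNE_of_tendsto_atTop (.inl hright)⟩
end

section
/- If x ∈ [0,1] is binary normal (i.e., D_0(x) = D_1(x) = 1/2), then L_a'(x) = 0 for every a ∈ (0,1) with a ≠ 1/2. -/
/-!
Write `x = (k_m + t_m) / 2 ^ m`, where `k_m` encodes the first `m` binary digits of `x` and
`t_m ∈ [0, 1]` is the tail. The functional equation makes `L` self-similar: on the level-`m`
dyadic interval containing `x` it is an affine copy of `L` on `[0, 1]`, scaled by
`W_m = a ^ (#zeros) * (1 - a) ^ (#ones)`. For small `h`, let `m` be the last level at which `|h|`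
is smaller than the distance from `x` to the boundary of its dyadic interval. Then
`|L (x + h) - L x| ≤ 2 M W_m`, with `M` a bound for `|L|` on `[0, 1]`, while
`|h| ≥ 2 ^ (-(m + R + 2))`, where `R` is the length of the run of equal digits after position
`m + 1`. Normality gives `R = o(m)` and `W_m = (a (1 - a)) ^ (m / 2 + o(m))`, so the difference
quotient is `(2 √(a (1 - a))) ^ (m + o(m)) → 0`, since `√(a (1 - a)) < 1 / 2` for `a ≠ 1 / 2`.
-/

open Topology Filter Set

lemma hasSum_one_div_two_pow_succ : HasSum (fun j : ℕ => (1 : ℝ) / 2 ^ (j + 1)) 1 := by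
  simpa only [pow_succ, div_div, mul_comm] using hasSum_geometric_two' (1 : ℝ)

lemma exists_lt_and_succ_le {α : Type*} [LinearOrder α] {r : ℕ → α} {t : α} {N : ℕ}
    (hN : t < r N) (ht : ∀ᶠ n in atTop, r n ≤ t) : ∃ m ≥ N, t < r m ∧ r (m + 1) ≤ t := by
  classical
  have hex : ∃ n, N ≤ n ∧ r n ≤ t := ((eventually_ge_atTop N).and ht).exists
  obtain ⟨hNn, hn⟩ := Nat.find_spec hex
  have hlt : N < Nat.find hex := lt_of_le_of_ne hNn fun h => (h ▸ hN).not_ge hn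
  have hmin : ∀ k < Nat.find hex, N ≤ k → t < r k := fun k hk hNk =>
    not_le.mp fun h => Nat.find_min hex hk ⟨hNk, h⟩
  obtain ⟨m, hm⟩ : ∃ m, Nat.find hex = m + 1 := Nat.exists_eq_add_one.mpr (by omega)
  rw [hm] at hn hlt hmin
  exact ⟨m, by omega, hmin m (by omega) (by omega), hn⟩

lemma tendsto_zero_of_forall_eventually_exists_le {α : Type*} {l : Filter α} {f : α → ℝ}
    {g : ℕ → ℝ} (hg : Tendsto g atTop (𝓝 0)) (h : ∀ N, ∀ᶠ y in l, ∃ m ≥ N, |f y| ≤ g m) :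
    Tendsto f l (𝓝 0) := by
  rw [Metric.tendsto_nhds]
  intro η hη
  obtain ⟨N, hN⟩ := eventually_atTop.mp ((tendsto_order.1 hg).2 η hη)
  filter_upwards [h N] with y ⟨m, hm, hy⟩
  rw [Real.dist_eq, sub_zero]
  exact hy.trans_lt (hN m hm)

lemma tendsto_zero_of_tendsto_log_div {f : ℕ → ℝ} (hf : ∀ n, 0 < f n) {c : ℝ} (hc : c < 0)
    (h : Tendsto (fun n => Real.log (f n) / n) atTop (𝓝 c)) : Tendsto f atTop (𝓝 0) := by
  have hlog : Tendsto (fun n => Real.log (f n)) atTop atBot := by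
    refine (h.neg_mul_atTop hc tendsto_natCast_atTop_atTop).congr' ?_
    filter_upwards [eventually_ne_atTop 0] with n hn
    field_simp
  simpa only [Function.comp_def, Real.exp_log (hf _)] using Real.tendsto_exp_atBot.comp hlog

section BinaryExpansion

variable {ε : ℕ → ℕ}

noncomputable def binaryTail (ε : ℕ → ℕ) (m : ℕ) : ℝ := ∑' j, (ε (m + j + 1) : ℝ) / 2 ^ (j + 1)

def binaryPrefix (ε : ℕ → ℕ) : ℕ → ℕ
  | 0 => 0
  | m + 1 => 2 * binaryPrefix ε m + ε (m + 1)

lemma summable_binaryTail (hε : ∀ n, ε n ≤ 1) (m : ℕ) :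
    Summable fun j => (ε (m + j + 1) : ℝ) / 2 ^ (j + 1) :=
  hasSum_one_div_two_pow_succ.summable.of_nonneg_of_le (fun _ => by positivity)
    fun j => by gcongr; exact_mod_cast hε _

lemma binaryTail_nonneg (m : ℕ) : 0 ≤ binaryTail ε m :=
  tsum_nonneg fun _ => by positivity

lemma digit_div_le_binaryTail (hε : ∀ n, ε n ≤ 1) (m j : ℕ) :
    (ε (m + j + 1) : ℝ) / 2 ^ (j + 1) ≤ binaryTail ε m :=
  (summable_binaryTail hε m).le_tsum j fun _ _ => by positivity

lemma binaryTail_compl (hε : ∀ n, ε n ≤ 1) (m : ℕ) :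
    binaryTail (fun n => 1 - ε n) m = 1 - binaryTail ε m := by
  rw [binaryTail, binaryTail, ← hasSum_one_div_two_pow_succ.tsum_eq,
    ← hasSum_one_div_two_pow_succ.summable.tsum_sub (summable_binaryTail hε m)]
  congr with j
  rw [Nat.cast_sub (hε _), sub_div, Nat.cast_one]

lemma binaryTail_le_one (hε : ∀ n, ε n ≤ 1) (m : ℕ) : binaryTail ε m ≤ 1 := by
  linarith [binaryTail_compl hε m ▸ binaryTail_nonneg (ε := fun n => 1 - ε n) m]

lemma binaryTail_succ (hε : ∀ n, ε n ≤ 1) (m : ℕ) :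
    binaryTail ε m = (ε (m + 1) + binaryTail ε (m + 1)) / 2 := by
  rw [binaryTail, (summable_binaryTail hε m).tsum_eq_zero_add, binaryTail, add_div,
    ← tsum_div_const]
  have hshift : ∀ j, (ε (m + (j + 1) + 1) : ℝ) / 2 ^ (j + 1 + 1)
      = ε (m + 1 + j + 1) / 2 ^ (j + 1) / 2 := fun j => by
    rw [show m + (j + 1) + 1 = m + 1 + j + 1 by omega, pow_succ _ (j + 1), div_div]
  simp only [hshift, add_zero, zero_add, pow_one]

lemma binaryTail_zero_eq (hε : ∀ n, ε n ≤ 1) (m : ℕ) :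
    binaryTail ε 0 = (binaryPrefix ε m + binaryTail ε m) / 2 ^ m := by
  induction m with
  | zero => simp [binaryPrefix]
  | succ m ih =>
    rw [ih, binaryTail_succ hε m, binaryPrefix]
    push_cast
    ring

def runLength (ε : ℕ → ℕ) (hrun : ∀ m, ∃ j, ε (m + j + 1) ≠ ε (m + 1)) (m : ℕ) : ℕ :=
  Nat.find (hrun m)

lemma inv_two_pow_runLength_le (hε : ∀ n, ε n ≤ 1) (hrun : ∀ m, ∃ j, ε (m + j + 1) ≠ ε (m + 1))
    (m : ℕ) :
    ((2 : ℝ) ^ (runLength ε hrun m + 1))⁻¹ ≤ min (binaryTail ε m) (1 - binaryTail ε m) := by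
  set R := runLength ε hrun m
  have hR : ε (m + R + 1) ≠ ε (m + 1) := Nat.find_spec (hrun m)
  have hone : ∀ j ≤ R, ε (m + j + 1) = 1 → ((2 : ℝ) ^ (R + 1))⁻¹ ≤ binaryTail ε m := by
    intro j hj hdig
    calc ((2 : ℝ) ^ (R + 1))⁻¹ ≤ ((2 : ℝ) ^ (j + 1))⁻¹ := by gcongr; norm_num
      _ = (ε (m + j + 1) : ℝ) / 2 ^ (j + 1) := by rw [hdig]; simp
      _ ≤ binaryTail ε m := digit_div_le_binaryTail hε m j
  have hzero : ∀ j ≤ R, ε (m + j + 1) = 0 → ((2 : ℝ) ^ (R + 1))⁻¹ ≤ 1 - binaryTail ε m := by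
    intro j hj hdig
    calc ((2 : ℝ) ^ (R + 1))⁻¹ ≤ ((2 : ℝ) ^ (j + 1))⁻¹ := by gcongr; norm_num
      _ = ((1 - ε (m + j + 1) : ℕ) : ℝ) / 2 ^ (j + 1) := by rw [hdig]; simp
      _ ≤ 1 - binaryTail ε m := by
        rw [← binaryTail_compl hε]
        exact digit_div_le_binaryTail (ε := fun n => 1 - ε n) (fun _ => Nat.sub_le _ _) m j
  have hR1 := hε (m + R + 1)
  rcases Nat.le_one_iff_eq_zero_or_eq_one.mp (hε (m + 1)) with hfirst | hfirst
  · exact le_min (hone R le_rfl (by omega)) (hzero 0 (Nat.zero_le _) hfirst)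
  · exact le_min (hone 0 (Nat.zero_le _) hfirst) (hzero R le_rfl (by omega))

lemma exists_digit_ne (hε : ∀ n, ε n ≤ 1) (hinf1 : ∀ N, ∃ n ≥ N, ε n = 1)
    (hinf0 : ∀ N, ∃ n ≥ N, ε n = 0) (m : ℕ) : ∃ j, ε (m + j + 1) ≠ ε (m + 1) := by
  obtain ⟨n, hn, hdigit⟩ : ∃ n ≥ m + 1, ε n ≠ ε (m + 1) := by
    rcases Nat.le_one_iff_eq_zero_or_eq_one.mp (hε (m + 1)) with h | h
    · exact (hinf1 (m + 1)).imp fun n hn => ⟨hn.1, by omega⟩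
    · exact (hinf0 (m + 1)).imp fun n hn => ⟨hn.1, by omega⟩
  exact ⟨n - (m + 1), by rwa [show m + (n - (m + 1)) + 1 = n by omega]⟩

end BinaryExpansion

section SelfSimilarity

variable {ε : ℕ → ℕ} {a : ℝ} {L : ℝ → ℝ}

def digitWeight (a : ℝ) (d : ℕ) : ℝ := if d = 1 then 1 - a else a

/-- The increment of `L_a` across the level-`m` dyadic interval whose binary prefix is
`ε 1, …, ε m`. -/
def dyadicMass (ε : ℕ → ℕ) (a : ℝ) (m : ℕ) : ℝ := ∏ i ∈ Finset.range m, digitWeight a (ε (i + 1))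

lemma dyadicMass_succ (m : ℕ) :
    dyadicMass ε a (m + 1) = dyadicMass ε a m * digitWeight a (ε (m + 1)) :=
  Finset.prod_range_succ _ _

lemma min_le_digitWeight (a : ℝ) (d : ℕ) : min a (1 - a) ≤ digitWeight a d := by
  unfold digitWeight; split_ifs
  exacts [min_le_right _ _, min_le_left _ _]

lemma digitWeight_pos (ha0 : 0 < a) (ha1 : a < 1) (d : ℕ) : 0 < digitWeight a d :=
  (lt_min ha0 (sub_pos.mpr ha1)).trans_le (min_le_digitWeight a d)

lemma dyadicMass_pos (ha0 : 0 < a) (ha1 : a < 1) (m : ℕ) : 0 < dyadicMass ε a m :=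
  Finset.prod_pos fun _ _ => digitWeight_pos ha0 ha1 _

lemma min_mul_dyadicMass_le (ha0 : 0 < a) (ha1 : a < 1) (m : ℕ) :
    min a (1 - a) * dyadicMass ε a m ≤ dyadicMass ε a (m + 1) := by
  rw [dyadicMass_succ, mul_comm (min _ _)]
  exact mul_le_mul_of_nonneg_left (min_le_digitWeight a _) (dyadicMass_pos ha0 ha1 m).le

lemma log_dyadicMass (hε : ∀ n, ε n ≤ 1) (ha0 : 0 < a) (ha1 : a < 1) (m : ℕ) :
    Real.log (dyadicMass ε a m)
      = m * Real.log a
        + (∑ k ∈ Finset.range m, (ε (k + 1) : ℝ)) * (Real.log (1 - a) - Real.log a) := by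
  have hw : ∀ d ≤ 1,
      Real.log (digitWeight a d) = Real.log a + d * (Real.log (1 - a) - Real.log a) := by
    intro d hd
    interval_cases d <;> simp [digitWeight]
  rw [dyadicMass, Real.log_prod fun _ _ => (digitWeight_pos ha0 ha1 _).ne',
    Finset.sum_congr rfl fun i _ => hw _ (hε (i + 1)), Finset.sum_add_distrib, Finset.sum_mul]
  simp

lemma deRham.exists_bound (hL : deRham a L) : ∃ M, ∀ y ∈ Icc (0 : ℝ) 1, |L y| ≤ M :=
  isCompact_Icc.exists_bound_of_continuousOn hL.1

lemma deRham.sub_half (hL : deRham a L) {d : ℕ} (hd : d ≤ 1) {u v : ℝ} (hu : u ∈ Icc (0 : ℝ) 1)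
    (hv : v ∈ Icc (0 : ℝ) 1) :
    L ((d + u) / 2) - L ((d + v) / 2) = digitWeight a d * (L u - L v) := by
  obtain ⟨-, hleft, hright⟩ := hL
  interval_cases d
  · have hu' := hleft (u / 2) ⟨by linarith [hu.1], by linarith [hu.2]⟩
    have hv' := hleft (v / 2) ⟨by linarith [hv.1], by linarith [hv.2]⟩
    simp only [Nat.cast_zero, zero_add, digitWeight, if_neg zero_ne_one]
    rw [hu', hv', mul_div_cancel₀ _ two_ne_zero, mul_div_cancel₀ _ two_ne_zero]
    ring
  · have hu' := hright ((1 + u) / 2) ⟨by linarith [hu.1], by linarith [hu.2]⟩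
    have hv' := hright ((1 + v) / 2) ⟨by linarith [hv.1], by linarith [hv.2]⟩
    simp only [Nat.cast_one, digitWeight, ↓reduceIte]
    rw [hu', hv', mul_div_cancel₀ _ two_ne_zero, mul_div_cancel₀ _ two_ne_zero, add_sub_cancel_left,
      add_sub_cancel_left]
    ring

lemma deRham.sub_binaryPrefix (hL : deRham a L) (hε : ∀ n, ε n ≤ 1) (m : ℕ) {u v : ℝ}
    (hu : u ∈ Icc (0 : ℝ) 1) (hv : v ∈ Icc (0 : ℝ) 1) :
    L ((binaryPrefix ε m + u) / 2 ^ m) - L ((binaryPrefix ε m + v) / 2 ^ m)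
      = dyadicMass ε a m * (L u - L v) := by
  induction m generalizing u v with
  | zero => simp [binaryPrefix, dyadicMass]
  | succ m ih =>
    have hdigit : ∀ w ∈ Icc (0 : ℝ) 1, (ε (m + 1) + w) / 2 ∈ Icc (0 : ℝ) 1 := fun w hw => by
      have : (ε (m + 1) : ℝ) ≤ 1 := by exact_mod_cast hε (m + 1)
      constructor <;> linarith [hw.1, hw.2, (Nat.cast_nonneg (ε (m + 1)) : (0 : ℝ) ≤ _)]
    have hshift : ∀ w : ℝ, (binaryPrefix ε (m + 1) + w) / 2 ^ (m + 1)
        = (binaryPrefix ε m + (ε (m + 1) + w) / 2) / 2 ^ m := fun w => by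
      rw [binaryPrefix]; push_cast; ring
    rw [hshift, hshift, ih (hdigit u hu) (hdigit v hv), hL.sub_half (hε _) hu hv,
      dyadicMass_succ, mul_assoc]

end SelfSimilarity

section Asymptotics

open Asymptotics

variable {ε : ℕ → ℕ} {a : ℝ}

lemma sum_range_add_runLength (hrun : ∀ m, ∃ j, ε (m + j + 1) ≠ ε (m + 1)) (m : ℕ) :
    ∑ k ∈ Finset.range (m + runLength ε hrun m), (ε (k + 1) : ℝ)
      = ∑ k ∈ Finset.range m, (ε (k + 1) : ℝ) + runLength ε hrun m * ε (m + 1) := by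
  have hconst : ∀ i ∈ Finset.range (runLength ε hrun m), (ε (m + i + 1) : ℝ) = ε (m + 1) :=
    fun i hi => by rw [not_not.mp (Nat.find_min (hrun m) (Finset.mem_range.mp hi))]
  rw [Finset.sum_range_add, Finset.sum_congr rfl hconst, Finset.sum_const, Finset.card_range,
    nsmul_eq_mul]

lemma isLittleO_runLength (hε : ∀ n, ε n ≤ 1) (hrun : ∀ m, ∃ j, ε (m + j + 1) ≠ ε (m + 1))
    (hd : Tendsto (fun n : ℕ => (∑ k ∈ Finset.range n, (ε (k + 1) : ℝ)) / n) atTop (𝓝 (1 / 2))) :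
    (fun m => (runLength ε hrun m : ℝ)) =o[atTop] (fun m => (m : ℝ)) := by
  set S : ℕ → ℝ := fun n => ∑ k ∈ Finset.range n, (ε (k + 1) : ℝ)
  have hdev : (fun n => S n - n / 2) =o[atTop] (fun n => (n : ℝ)) := by
    rw [isLittleO_iff_tendsto' (Eventually.of_forall fun n hn => by simp_all [S])]
    have hlim := hd.sub_const (1 / 2)
    rw [sub_self] at hlim
    refine hlim.congr' ?_
    filter_upwards [eventually_ne_atTop 0] with n hn
    simp only [S]
    field_simp
  refine IsLittleO.of_bound fun c hc => ?_
  set δ := min (c / 8) (1 / 4)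
  have hδ : 0 < δ := lt_min (by positivity) (by norm_num)
  have hshift : Tendsto (fun m => m + runLength ε hrun m) atTop atTop :=
    tendsto_atTop_mono (fun m => Nat.le_add_right _ _) tendsto_id
  filter_upwards [hdev.def hδ, hshift.eventually (hdev.def hδ)] with m h1 h2
  set R := runLength ε hrun m
  simp only [Real.norm_eq_abs, Nat.abs_cast] at h1 h2 ⊢
  have hjump : |(S (m + R) - (m + R : ℕ) / 2) - (S m - m / 2)| = R / 2 := by
    have hsum : S (m + R) = S m + R * ε (m + 1) := sum_range_add_runLength hrun m
    have hdigit : |(ε (m + 1) : ℝ) - 1 / 2| = 1 / 2 := by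
      rcases Nat.le_one_iff_eq_zero_or_eq_one.mp (hε (m + 1)) with h | h <;> norm_num [h]
    rw [hsum, show S m + R * ε (m + 1) - ((m + R : ℕ) : ℝ) / 2 - (S m - m / 2)
      = R * (ε (m + 1) - 1 / 2) by push_cast; ring, abs_mul, hdigit, Nat.abs_cast]
    ring
  have htri := abs_sub (S (m + R) - (m + R : ℕ) / 2) (S m - m / 2)
  push_cast at h2 hjump htri
  have hR : δ * R ≤ 1 / 4 * R := mul_le_mul_of_nonneg_right (min_le_right _ _) R.cast_nonneg
  have hm : δ * m ≤ c / 8 * m := mul_le_mul_of_nonneg_right (min_le_left _ _) m.cast_nonneg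
  nlinarith

theorem tendsto_dyadicMass_mul_two_pow (hε : ∀ n, ε n ≤ 1) (ha0 : 0 < a) (ha1 : a < 1)
    (hane : a ≠ 1 / 2)
    (hd : Tendsto (fun n : ℕ => (∑ k ∈ Finset.range n, (ε (k + 1) : ℝ)) / n) atTop (𝓝 (1 / 2)))
    {J : ℕ → ℕ} (hJ : (fun m => (J m : ℝ)) =o[atTop] (fun m => (m : ℝ))) :
    Tendsto (fun m => dyadicMass ε a m * 2 ^ (m + J m)) atTop (𝓝 0) := by
  have hpos := dyadicMass_pos (ε := ε) ha0 ha1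
  have hquad : Real.log a + Real.log (1 - a) + 2 * Real.log 2 < 0 := by
    have h : Real.log (2 ^ 2 * (a * (1 - a))) < 0 :=
      Real.log_neg (by nlinarith) (by nlinarith [sq_pos_of_ne_zero (sub_ne_zero.mpr hane)])
    rwa [Real.log_mul (by norm_num) (by nlinarith), Real.log_mul ha0.ne' (by linarith),
      Real.log_pow, add_comm] at h
  refine tendsto_zero_of_tendsto_log_div (fun m => mul_pos (hpos m) (by positivity))
    (c := (Real.log a + Real.log (1 - a) + 2 * Real.log 2) / 2) (by linarith) ?_
  have hlim := ((hd.mul_const (Real.log (1 - a) - Real.log a)).const_add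
    (Real.log a + Real.log 2)).add (hJ.tendsto_div_nhds_zero.mul_const (Real.log 2))
  convert hlim.congr' ?_ using 2
  · ring
  filter_upwards [eventually_ne_atTop 0] with m hm
  rw [Real.log_mul (hpos m).ne' (by positivity), log_dyadicMass hε ha0 ha1, Real.log_pow]
  push_cast
  field_simp
  ring

end Asymptotics

section Slope

variable {ε : ℕ → ℕ} {a : ℝ} {L : ℝ → ℝ} {M : ℝ}

lemma deRham.abs_sub_le (hL : deRham a L) (hε : ∀ n, ε n ≤ 1) (ha0 : 0 < a) (ha1 : a < 1)
    (hM : ∀ y ∈ Icc (0 : ℝ) 1, |L y| ≤ M) {m : ℕ} {h : ℝ}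
    (hh : 2 ^ m * |h| ≤ min (binaryTail ε m) (1 - binaryTail ε m)) :
    |L (binaryTail ε 0 + h) - L (binaryTail ε 0)| ≤ 2 * M * dyadicMass ε a m := by
  set t := binaryTail ε m
  have ht : t ∈ Icc (0 : ℝ) 1 := ⟨binaryTail_nonneg m, binaryTail_le_one hε m⟩
  have hu : t + 2 ^ m * h ∈ Icc (0 : ℝ) 1 := by
    rw [← abs_of_pos (by positivity : (0 : ℝ) < 2 ^ m), ← abs_mul] at hh
    have := abs_le.mp hh
    constructor <;> linarith [this.1, this.2, min_le_left t (1 - t), min_le_right t (1 - t)]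
  have hx : (binaryPrefix ε m + t) / 2 ^ m + h = (binaryPrefix ε m + (t + 2 ^ m * h)) / 2 ^ m := by
    field_simp
    ring
  rw [binaryTail_zero_eq hε m, hx, hL.sub_binaryPrefix hε m hu ht, abs_mul,
    abs_of_pos (dyadicMass_pos ha0 ha1 m), mul_comm (2 * M)]
  refine mul_le_mul_of_nonneg_left ?_ (dyadicMass_pos ha0 ha1 m).le
  calc |L (t + 2 ^ m * h) - L t| ≤ |L (t + 2 ^ m * h)| + |L t| := abs_sub _ _
    _ ≤ 2 * M := by linarith [hM _ hu, hM _ ht]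

lemma deRham.eventually_exists_abs_slope_le (hL : deRham a L) (hε : ∀ n, ε n ≤ 1)
    (hrun : ∀ m, ∃ j, ε (m + j + 1) ≠ ε (m + 1)) (ha0 : 0 < a) (ha1 : a < 1)
    (hM : ∀ y ∈ Icc (0 : ℝ) 1, |L y| ≤ M) (N : ℕ) :
    ∀ᶠ h in 𝓝[≠] (0 : ℝ), ∃ m ≥ N, |(L (binaryTail ε 0 + h) - L (binaryTail ε 0)) / h|
      ≤ 4 * M / min a (1 - a) * (dyadicMass ε a m * 2 ^ (m + runLength ε hrun m)) := by
  -- `r n` is the distance from `x` to the boundary of its level-`n` dyadic interval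
  set r : ℕ → ℝ := fun n => min (binaryTail ε n) (1 - binaryTail ε n) / 2 ^ n
  have hr_ge : ∀ n, ((2 : ℝ) ^ (n + runLength ε hrun n + 1))⁻¹ ≤ r n := fun n => by
    simp only [r]
    rw [add_assoc, pow_add, mul_inv, mul_comm]
    exact div_le_div_of_nonneg_right (inv_two_pow_runLength_le hε hrun n) (by positivity)
  have hr_le : ∀ n, r n ≤ (1 / 2) ^ n := fun n => by
    simp only [r]
    rw [one_div_pow]
    gcongr
    exact (min_le_right _ _).trans (by linarith [binaryTail_nonneg (ε := ε) n])
  have hc : 0 < min a (1 - a) := lt_min ha0 (sub_pos.mpr ha1)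
  have hM0 : 0 ≤ M := (abs_nonneg _).trans (hM 0 ⟨le_rfl, zero_le_one⟩)
  filter_upwards [self_mem_nhdsWithin, nhdsWithin_le_nhds
    (Metric.ball_mem_nhds 0 ((by positivity : (0 : ℝ) < _).trans_le (hr_ge N)))] with h hh0 hhN
  rw [mem_ball_zero_iff, Real.norm_eq_abs] at hhN
  have hh : 0 < |h| := abs_pos.mpr hh0
  obtain ⟨m, hmN, hm, hm1⟩ := exists_lt_and_succ_le hhN
    (((tendsto_pow_atTop_nhds_zero_of_lt_one (by norm_num) (by norm_num)).eventually
      (ge_mem_nhds hh)).mono fun n hn => (hr_le n).trans hn)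
  refine ⟨m + 1, by omega, ?_⟩
  set R := runLength ε hrun (m + 1)
  have hup := hL.abs_sub_le hε ha0 ha1 hM ((lt_div_iff₀' (by positivity)).mp hm).le
  have hlow := (hr_ge (m + 1)).trans hm1
  have hmass := min_mul_dyadicMass_le (ε := ε) ha0 ha1 m
  rw [abs_div]
  calc |L (binaryTail ε 0 + h) - L (binaryTail ε 0)| / |h|
      ≤ 2 * M * dyadicMass ε a m / ((2 : ℝ) ^ (m + 1 + R + 1))⁻¹ :=
        div_le_div₀ (by have := dyadicMass_pos (ε := ε) ha0 ha1 m; positivity) hup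
          (by positivity) hlow
    _ = 4 * M / min a (1 - a) * (min a (1 - a) * dyadicMass ε a m * 2 ^ (m + 1 + R)) := by
        field_simp
        ring
    _ ≤ 4 * M / min a (1 - a) * (dyadicMass ε a (m + 1) * 2 ^ (m + 1 + R)) := by
        gcongr

end Slope

theorem deriv_zero_at_binary_normal
    (ε : ℕ → ℕ) (hε : ∀ n, ε n ≤ 1)
    (hinf1 : ∀ N, ∃ n ≥ N, ε n = 1) (hinf0 : ∀ N, ∃ n ≥ N, ε n = 0)
    (x : ℝ) (hx : x = ∑' n : ℕ, (ε (n+1) : ℝ) / 2 ^ (n+1))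
    (hd : Tendsto (fun n : ℕ => (∑ k ∈ Finset.range n, (ε (k+1) : ℝ)) / n)
      atTop (𝓝 (1/2))) :
    ∀ a : ℝ, 0 < a → a < 1 → a ≠ 1/2 → ∀ L : ℝ → ℝ, deRham a L →
      Tendsto (fun h : ℝ => (L (x+h) - L x) / h) (𝓝[≠] 0) (𝓝 0) := by
  intro a ha0 ha1 hane L hL
  have hrun := exists_digit_ne hε hinf1 hinf0
  obtain ⟨M, hM⟩ := hL.exists_bound
  obtain rfl : x = binaryTail ε 0 := by simp [hx, binaryTail]
  have hmass := tendsto_dyadicMass_mul_two_pow hε ha0 ha1 hane hd (isLittleO_runLength hε hrun hd)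
  exact tendsto_zero_of_forall_eventually_exists_le
    (by simpa using hmass.const_mul (4 * M / min a (1 - a)))
    (hL.eventually_exists_abs_slope_le hε hrun ha0 ha1 hM)
end
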